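/- Let y ∈ ℂ^M, A ∈ ℂ^{M×N}, λ > 0, Λ > 0 and κ ≥ 0. Let x̂ be a global minimizer of the complex LASSO objective and let x̂^d = x̂ + (1/Λ) A^H (y − A x̂) be the debiased LASSO estimator. Then for every index i, |x̂^d_i| > κ + λ/Λ if and only if |x̂_i| > κ. -/

import Mathlib

open Matrix Finset

/-!
Minimality of `x̂` along the single coordinate `i`, i.e. against `x̂ + z eᵢ`, says that
`gᵢ = (Aᴴ(y − Ax̂))ᵢ` satisfies `⟪z, gᵢ⟫ ≤ λ(|x̂ᵢ + z| − |x̂ᵢ|) + O(|z|²)` for all `z ∈ ℂ`.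
Taking `z = t gᵢ` and `z = −t x̂ᵢ` with `t → 0⁺` gives the subgradient conditions `|gᵢ| ≤ λ` and
`λ|x̂ᵢ| ≤ ⟪x̂ᵢ, gᵢ⟫`. Hence `|x̂ᵈᵢ| = |x̂ᵢ + gᵢ/Λ| ≤ |x̂ᵢ| + λ/Λ` always, with equality when
`x̂ᵢ ≠ 0`; as `κ ≥ 0`, both directions of the detector equivalence follow.
-/

/-- The complex LASSO objective `x ↦ (1/2)‖y − Ax‖₂² + λ·∑ᵢ |xᵢ|`. -/
noncomputable def lassoObj {M N : ℕ} (y : Fin M → ℂ) (A : Matrix (Fin M) (Fin N) ℂ)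
    (lam : ℝ) (x : Fin N → ℂ) : ℝ :=
  (1 / 2) * ∑ j, ‖y j - A.mulVec x j‖ ^ 2 + lam * ∑ i, ‖x i‖

/-- The debiased LASSO estimator `x̂ᵈ = x̂ + (1/Λ) Aᴴ(y − Ax̂)`. -/
noncomputable def debiasedLasso {M N : ℕ} (y : Fin M → ℂ) (A : Matrix (Fin M) (Fin N) ℂ)
    (Lam : ℝ) (xh : Fin N → ℂ) : Fin N → ℂ :=
  xh + (1 / Lam : ℝ) • Aᴴ.mulVec (y - A.mulVec xh)

open Filter Topology RealInnerProductSpace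

theorem le_of_forall_pos_lt_one_le_add_mul {a b c : ℝ}
    (h : ∀ t : ℝ, 0 < t → t < 1 → a ≤ b + t * c) : a ≤ b := by
  have hlim : Tendsto (fun t : ℝ => b + t * c) (𝓝[>] 0) (𝓝 b) := by
    have hcont : Continuous fun t : ℝ => b + t * c := by fun_prop
    simpa using (hcont.tendsto 0).mono_left nhdsWithin_le_nhds
  refine ge_of_tendsto hlim ?_
  filter_upwards [Ioo_mem_nhdsGT one_pos] with t ht using h t ht.1 ht.2

section Subgradient

variable {E : Type*} [NormedAddCommGroup E] [InnerProductSpace ℝ E] {a g : E} {lam c : ℝ}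

theorem norm_le_of_forall_inner_le (hlam : 0 ≤ lam)
    (h : ∀ z, ⟪z, g⟫ ≤ lam * (‖a + z‖ - ‖a‖) + c * ‖z‖ ^ 2) : ‖g‖ ≤ lam := by
  have hsq : ‖g‖ ^ 2 ≤ lam * ‖g‖ := by
    refine le_of_forall_pos_lt_one_le_add_mul (c := c * ‖g‖ ^ 2) fun t ht _ => ?_
    have htri : ‖a + t • g‖ - ‖a‖ ≤ t * ‖g‖ := by
      linarith [norm_add_le a (t • g), norm_smul_of_nonneg ht.le g]
    have := h (t • g)
    rw [real_inner_smul_left, real_inner_self_eq_norm_sq, norm_smul_of_nonneg ht.le] at this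
    nlinarith [mul_le_mul_of_nonneg_left htri hlam]
  nlinarith [norm_nonneg g]

theorem mul_norm_le_inner_of_forall_inner_le
    (h : ∀ z, ⟪z, g⟫ ≤ lam * (‖a + z‖ - ‖a‖) + c * ‖z‖ ^ 2) : lam * ‖a‖ ≤ ⟪a, g⟫ := by
  refine le_of_forall_pos_lt_one_le_add_mul (c := c * ‖a‖ ^ 2) fun t ht ht1 => ?_
  have hshrink : ‖a + (-t) • a‖ = (1 - t) * ‖a‖ := by
    rw [show a + (-t) • a = (1 - t) • a by module, norm_smul_of_nonneg (by linarith)]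
  have := h ((-t) • a)
  rw [real_inner_smul_left, hshrink, norm_smul, Real.norm_eq_abs, abs_neg, abs_of_pos ht] at this
  nlinarith

theorem norm_add_smul_le (hg : ‖g‖ ≤ lam) {μ : ℝ} (hμ : 0 ≤ μ) : ‖a + μ • g‖ ≤ ‖a‖ + μ * lam := by
  calc ‖a + μ • g‖ ≤ ‖a‖ + μ * ‖g‖ := by rw [← norm_smul_of_nonneg hμ]; exact norm_add_le _ _
    _ ≤ ‖a‖ + μ * lam := by gcongr

theorem norm_add_smul_ge (ha : a ≠ 0) (hag : lam * ‖a‖ ≤ ⟪a, g⟫) {μ : ℝ} (hμ : 0 ≤ μ) :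
    ‖a‖ + μ * lam ≤ ‖a + μ • g‖ := by
  have hpos : 0 < ‖a‖ := norm_pos_iff.mpr ha
  refine le_of_mul_le_mul_left ?_ hpos
  calc ‖a‖ * (‖a‖ + μ * lam) ≤ ⟪a, a + μ • g⟫ := by
        rw [inner_add_right, real_inner_self_eq_norm_sq, real_inner_smul_right]
        nlinarith [mul_le_mul_of_nonneg_left hag hμ]
    _ ≤ ‖a‖ * ‖a + μ • g‖ := real_inner_le_norm _ _

end Subgradient

theorem sum_norm_add_single {ι E : Type*} [Fintype ι] [DecidableEq ι] [SeminormedAddCommGroup E]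
    (x : ι → E) (i : ι) (z : E) :
    ∑ k, ‖(x + Pi.single i z : ι → E) k‖ = ∑ k, ‖x k‖ + (‖x i + z‖ - ‖x i‖) := by
  have hoff : ∀ k ∈ univ.erase i, ‖(x + Pi.single i z : ι → E) k‖ = ‖x k‖ := fun k hk => by
    rw [Pi.add_apply, Pi.single_eq_of_ne (ne_of_mem_erase hk), add_zero]
  rw [← add_sum_erase _ _ (mem_univ i), sum_congr rfl hoff,
    ← add_sum_erase _ (fun k => ‖x k‖) (mem_univ i), Pi.add_apply, Pi.single_eq_same]
  ring

theorem sum_norm_sub_mul_sq {ι : Type*} [Fintype ι] (r a : ι → ℂ) (z : ℂ) :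
    ∑ j, ‖r j - a j * z‖ ^ 2
      = ∑ j, ‖r j‖ ^ 2 - 2 * ⟪z, ∑ j, star (a j) * r j⟫ + (∑ j, ‖a j‖ ^ 2) * ‖z‖ ^ 2 := by
  have hinner : ∀ j, ⟪r j, a j * z⟫ = ⟪z, star (a j) * r j⟫ := fun j => by
    simp only [Complex.inner, Complex.star_def, Complex.mul_re, Complex.mul_im, Complex.conj_re,
      Complex.conj_im]
    ring
  simp only [norm_sub_sq_real, hinner, norm_mul, mul_pow, inner_sum, Finset.sum_add_distrib,
    Finset.sum_sub_distrib, ← Finset.mul_sum, ← Finset.sum_mul]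

theorem lassoObj_add_single {M N : ℕ} (y : Fin M → ℂ) (A : Matrix (Fin M) (Fin N) ℂ) (lam : ℝ)
    (x : Fin N → ℂ) (i : Fin N) (z : ℂ) :
    lassoObj y A lam (x + Pi.single i z)
      = lassoObj y A lam x - ⟪z, (Aᴴ *ᵥ (y - A *ᵥ x)) i⟫
        + (1 / 2) * (∑ j, ‖A j i‖ ^ 2) * ‖z‖ ^ 2 + lam * (‖x i + z‖ - ‖x i‖) := by
  have hres : ∀ j, y j - (A *ᵥ (x + Pi.single i z)) j = (y - A *ᵥ x) j - A j i * z := fun j => by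
    simp only [mulVec_add, mulVec_single, op_smul_eq_smul, Pi.add_apply, Pi.smul_apply, col_apply,
      smul_eq_mul, Pi.sub_apply]
    ring
  have hgrad : (Aᴴ *ᵥ (y - A *ᵥ x)) i = ∑ j, star (A j i) * (y - A *ᵥ x) j := by
    simp [mulVec, dotProduct, conjTranspose_apply]
  unfold lassoObj
  rw [sum_norm_add_single]
  simp only [hres, sum_norm_sub_mul_sq, hgrad, Pi.sub_apply]
  ring

theorem inner_conjTranspose_residual_le_of_lasso_min {M N : ℕ} {y : Fin M → ℂ}
    {A : Matrix (Fin M) (Fin N) ℂ} {lam : ℝ} {x : Fin N → ℂ}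
    (hmin : ∀ x' : Fin N → ℂ, lassoObj y A lam x ≤ lassoObj y A lam x') (i : Fin N) (z : ℂ) :
    ⟪z, (Aᴴ *ᵥ (y - A *ᵥ x)) i⟫
      ≤ lam * (‖x i + z‖ - ‖x i‖) + (1 / 2) * (∑ j, ‖A j i‖ ^ 2) * ‖z‖ ^ 2 := by
  have := hmin (x + Pi.single i z)
  rw [lassoObj_add_single] at this
  linarith

/-- for every index `i`, `|x̂ᵈᵢ| > κ + λ/Λ` iff `|x̂ᵢ| > κ`. -/
theorem debiasedLasso_detector_iff {M N : ℕ} (y : Fin M → ℂ)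
    (A : Matrix (Fin M) (Fin N) ℂ) (lam : ℝ) (hlam : 0 < lam)
    (Lam : ℝ) (hLam : 0 < Lam) (κ : ℝ) (hκ : 0 ≤ κ) (xh : Fin N → ℂ)
    (hmin : ∀ x : Fin N → ℂ, lassoObj y A lam xh ≤ lassoObj y A lam x) :
    ∀ i : Fin N, κ + lam / Lam < ‖debiasedLasso y A Lam xh i‖ ↔ κ < ‖xh i‖ := by
  intro i
  have hopt := inner_conjTranspose_residual_le_of_lasso_min hmin i
  have hμ : 0 ≤ 1 / Lam := by positivity
  have hdiv : 1 / Lam * lam = lam / Lam := one_div_mul_eq_div Lam lam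
  change κ + lam / Lam < ‖xh i + (1 / Lam) • (Aᴴ *ᵥ (y - A *ᵥ xh)) i‖ ↔ _
  constructor
  · intro h
    have hupper := norm_add_smul_le (norm_le_of_forall_inner_le hlam.le hopt) hμ (a := xh i)
    linarith
  · intro h
    have ha : xh i ≠ 0 := norm_pos_iff.mp (hκ.trans_lt h)
    have hlower := norm_add_smul_ge ha (mul_norm_le_inner_of_forall_inner_le hopt) hμ
    linarith
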